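/- arXiv:2010.02973 — 4 statements merged into one kernel-verified Lean document; each statement's English description precedes it below -/
import Mathlib

section
/- The Laplace mechanism is ε-differentially private: if f : D → ℝ has global sensitivity GS_f = max over neighboring datasets D, D' of |f(D) − f(D')|, then the mechanism A(D) = f(D) + Z, where Z is drawn from the Laplace distribution with scale GS_f/ε, satisfies Pr[A(D) ∈ S] ≤ e^ε · Pr[A(D') ∈ S] for all neighboring D, D' and all measurable sets S ⊆ ℝ. -/
/-! By the triangle inequality, moving the location of a Laplace density of scale `b` by at most
`ε * b` changes its value at every point by at most a factor `exp ε`; integrate over `S`. -/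

open MeasureTheory Real Set

noncomputable def laplacePDF (μ b z : ℝ) : ℝ := exp (-|z - μ| / b) / (2 * b)

lemma integrable_exp_neg_abs_div {b : ℝ} (hb : 0 < b) :
    Integrable fun z : ℝ => exp (-|z| / b) := by
  have hIic : IntegrableOn (fun z : ℝ => exp (-|z| / b)) (Iic 0) := by
    refine (integrableOn_exp_mul_Iic (inv_pos.mpr hb) 0).congr_fun (fun z hz => ?_)
      measurableSet_Iic
    rw [abs_of_nonpos hz, neg_neg]
    ring_nf
  have hIoi : IntegrableOn (fun z : ℝ => exp (-|z| / b)) (Ioi 0) := by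
    refine (integrableOn_exp_mul_Ioi (neg_neg_iff_pos.mpr (inv_pos.mpr hb)) 0).congr_fun
      (fun z hz => ?_) measurableSet_Ioi
    rw [abs_of_pos hz]
    ring_nf
  rw [← integrableOn_univ, ← Iic_union_Ioi (a := (0 : ℝ))]
  exact hIic.union hIoi

lemma integrable_laplacePDF (μ : ℝ) {b : ℝ} (hb : 0 < b) : Integrable (laplacePDF μ b) :=
  ((integrable_exp_neg_abs_div hb).comp_sub_right μ).div_const _

lemma laplacePDF_le_exp_mul {μ μ' b ε : ℝ} (hb : 0 < b) (hμ : |μ - μ'| ≤ ε * b) (z : ℝ) :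
    laplacePDF μ b z ≤ exp ε * laplacePDF μ' b z := by
  have htri : |z - μ'| ≤ |z - μ| + ε * b :=
    (abs_sub_le z μ μ').trans (add_le_add_right hμ _)
  have hexp : -|z - μ| / b ≤ ε + -|z - μ'| / b := by
    rw [div_le_iff₀ hb, add_mul, div_mul_cancel₀ _ hb.ne']
    linarith
  calc laplacePDF μ b z ≤ exp (ε + -|z - μ'| / b) / (2 * b) := by
        unfold laplacePDF; gcongr
    _ = exp ε * laplacePDF μ' b z := by
        rw [laplacePDF, exp_add, mul_div_assoc]

lemma setIntegral_laplacePDF_le {μ μ' b ε : ℝ} (hb : 0 < b) (hμ : |μ - μ'| ≤ ε * b)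
    (S : Set ℝ) :
    ∫ z in S, laplacePDF μ b z ≤ exp ε * ∫ z in S, laplacePDF μ' b z := by
  rw [← integral_const_mul]
  exact setIntegral_mono (integrable_laplacePDF μ hb).integrableOn
    ((integrable_laplacePDF μ' hb).const_mul _).integrableOn (laplacePDF_le_exp_mul hb hμ)

lemma laplacePDF_div (μ z : ℝ) {b ε : ℝ} (hε : ε ≠ 0) :
    laplacePDF μ (b / ε) z = ε / (2 * b) * exp (-(ε * |z - μ|) / b) := by
  rw [laplacePDF, div_div_eq_mul_div]
  field_simp

theorem laplace_mechanism_dp_general {Dataset : Type*} (Neighbor : Dataset → Dataset → Prop)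
    (f : Dataset → ℝ) (GS ε : ℝ) (hGS : 0 < GS) (hε : 0 < ε)
    (hsens : ∀ D D', Neighbor D D' → |f D - f D'| ≤ GS)
    (D D' : Dataset) (hN : Neighbor D D') (S : Set ℝ) :
    ∫ z in S, (ε / (2 * GS)) * Real.exp (-(ε * |z - f D|) / GS) ≤
      Real.exp ε * ∫ z in S, (ε / (2 * GS)) * Real.exp (-(ε * |z - f D'|) / GS) := by
  have hshift : |f D - f D'| ≤ ε * (GS / ε) := by
    rw [mul_div_cancel₀ _ hε.ne']
    exact hsens D D' hN
  simpa only [laplacePDF_div _ _ hε.ne'] using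
    setIntegral_laplacePDF_le (div_pos hGS hε) hshift S

/-- The Laplace mechanism `A(D) = f(D) + Lap(GS/ε)` is `ε`-differentially private:
for neighboring datasets `D, D'` and any measurable set `S` of outputs,
`Pr[A(D) ∈ S] ≤ exp ε · Pr[A(D') ∈ S]`, where the output distribution of `A(D)` has
Laplace density `z ↦ (ε/(2·GS)) · exp(-ε·|z - f D|/GS)` (scale `b = GS/ε`). -/
theorem laplace_mechanism_dp {Dataset : Type*} (Neighbor : Dataset → Dataset → Prop)
    (f : Dataset → ℝ) (GS ε : ℝ) (hGS : 0 < GS) (hε : 0 < ε)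
    (hsens : ∀ D D', Neighbor D D' → |f D - f D'| ≤ GS)
    (D D' : Dataset) (hN : Neighbor D D') (S : Set ℝ) (hS : MeasurableSet S) :
    ∫ z in S, (ε / (2 * GS)) * Real.exp (-(ε * |z - f D|) / GS) ≤
      Real.exp ε * ∫ z in S, (ε / (2 * GS)) * Real.exp (-(ε * |z - f D'|) / GS) :=
  laplace_mechanism_dp_general Neighbor f GS ε hGS hε hsens D D' hN S
end

section
/- The exponential mechanism is ε-differentially private: let q(D, r) be a utility function with global sensitivity Δq = max over neighboring D, D' and all r of |q(D,r) − q(D',r)|, over a finite output range R. The mechanism that outputs r ∈ R with probability proportional to exp(ε·q(D,r)/(2Δq)) satisfies, for every neighboring D, D' and every r ∈ R, Pr[A(D) = r] ≤ e^ε · Pr[A(D') = r]. -/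
open Finset

/-- The exponential mechanism is `ε`-differentially private: outputting `r` with
probability proportional to `exp(ε·q(D,r)/(2Δq))` satisfies, for all neighboring `D, D'`
and every output `r`, `Pr[A(D) = r] ≤ exp ε · Pr[A(D') = r]`. -/
theorem exponential_mechanism_dp {Dataset R : Type*} [Fintype R] [Nonempty R]
    (Neighbor : Dataset → Dataset → Prop) (q : Dataset → R → ℝ) (Δq ε : ℝ)
    (hΔq : 0 < Δq) (hε : 0 ≤ ε)
    (hsens : ∀ D D', Neighbor D D' → ∀ r, |q D r - q D' r| ≤ Δq)
    (D D' : Dataset) (hN : Neighbor D D') (r : R) :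
    Real.exp (ε * q D r / (2 * Δq)) / ∑ r' : R, Real.exp (ε * q D r' / (2 * Δq)) ≤
      Real.exp ε *
        (Real.exp (ε * q D' r / (2 * Δq)) / ∑ r' : R, Real.exp (ε * q D' r' / (2 * Δq))) := by
  set S := ∑ r' : R, Real.exp (ε * q D r' / (2 * Δq)) with hS
  set S' := ∑ r' : R, Real.exp (ε * q D' r' / (2 * Δq)) with hS'
  have hSpos : 0 < S := Finset.sum_pos (fun i _ => Real.exp_pos _) Finset.univ_nonempty
  have hS'pos : 0 < S' := Finset.sum_pos (fun i _ => Real.exp_pos _) Finset.univ_nonempty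
  -- pointwise bound: exp(ε q D x /(2Δq)) ≤ exp(ε/2) * exp(ε q D' x /(2Δq))
  have key : ∀ x, Real.exp (ε * q D x / (2 * Δq)) ≤
      Real.exp (ε / 2) * Real.exp (ε * q D' x / (2 * Δq)) := by
    intro x
    rw [← Real.exp_add, Real.exp_le_exp]
    have h := (abs_le.mp (hsens D D' hN x)).2
    have h2 : ε * (q D x - q D' x) ≤ ε * Δq := by
      calc ε * (q D x - q D' x) ≤ ε * |q D x - q D' x| := by
            apply mul_le_mul_of_nonneg_left (le_abs_self _) hε
        _ ≤ ε * Δq := mul_le_mul_of_nonneg_left (hsens D D' hN x) hε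
    have : ε * q D x / (2 * Δq) - ε * q D' x / (2 * Δq) ≤ ε / 2 := by
      rw [div_sub_div_same, ← mul_sub]
      rw [div_le_div_iff₀ (by linarith) (by norm_num)]
      nlinarith
    linarith
  have key' : ∀ x, Real.exp (ε * q D' x / (2 * Δq)) ≤
      Real.exp (ε / 2) * Real.exp (ε * q D x / (2 * Δq)) := by
    intro x
    rw [← Real.exp_add, Real.exp_le_exp]
    have h2 : ε * (q D' x - q D x) ≤ ε * Δq := by
      have habs : |q D' x - q D x| ≤ Δq := by
        rw [abs_sub_comm]; exact hsens D D' hN x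
      calc ε * (q D' x - q D x) ≤ ε * |q D' x - q D x| := by
            apply mul_le_mul_of_nonneg_left (le_abs_self _) hε
        _ ≤ ε * Δq := mul_le_mul_of_nonneg_left habs hε
    have : ε * q D' x / (2 * Δq) - ε * q D x / (2 * Δq) ≤ ε / 2 := by
      rw [div_sub_div_same, ← mul_sub]
      rw [div_le_div_iff₀ (by linarith) (by norm_num)]
      nlinarith
    linarith
  have hsum : S' ≤ Real.exp (ε / 2) * S := by
    rw [hS, hS', Finset.mul_sum]
    exact Finset.sum_le_sum fun i _ => key' i
  rw [div_le_iff₀ hSpos]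
  calc Real.exp (ε * q D r / (2 * Δq))
      ≤ Real.exp (ε / 2) * Real.exp (ε * q D' r / (2 * Δq)) := key r
    _ ≤ Real.exp (ε / 2) * Real.exp (ε * q D' r / (2 * Δq)) *
        (Real.exp (ε / 2) * S / S') := by
        nth_rewrite 1 [← mul_one (Real.exp (ε / 2) * Real.exp (ε * q D' r / (2 * Δq)))]
        apply mul_le_mul_of_nonneg_left _ (by positivity)
        rw [le_div_iff₀ hS'pos, one_mul]
        exact hsum
    _ = Real.exp ε * (Real.exp (ε * q D' r / (2 * Δq)) / S') * S := by
        rw [show Real.exp ε = Real.exp (ε/2) * Real.exp (ε/2) by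
          rw [← Real.exp_add]; ring_nf]
        field_simp
end

section
/- The β-smooth sensitivity is the smallest β-smooth upper bound: if S is any β-smooth upper bound on LS_f, then S(D) ≥ S*_{f,β}(D) for every dataset D. -/
/-- The `β`-smooth sensitivity is the smallest `β`-smooth upper bound: if `S` is any
`β`-smooth upper bound on `LS_f`, then `S D ≥ S*_{f,β}(D)` for every dataset `D`. -/
theorem smooth_sensitivity_smallest {Dataset : Type*}
    (d : Dataset → Dataset → ℕ)
    (hd0 : ∀ D, d D D = 0)
    (hdsymm : ∀ D D', d D D' = d D' D)
    (htri : ∀ A B C, d A C ≤ d A B + d B C)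
    -- any two datasets at distance k are joined by a path of k neighboring steps
    (hpath : ∀ D D', ∃ g : ℕ → Dataset, g 0 = D ∧ g (d D D') = D' ∧
      ∀ i < d D D', d (g i) (g (i + 1)) = 1)
    (LS : Dataset → ℝ) (β : ℝ) (hβ : 0 ≤ β)
    (S : Dataset → ℝ)
    (hub : ∀ D, LS D ≤ S D)
    (hsmooth : ∀ D D', d D D' = 1 → S D ≤ Real.exp β * S D')
    (Sstar : Dataset → ℝ)
    (hSstar : ∀ D, IsLUB
      {x | ∃ D', x = LS D' * Real.exp (-(β * (d D D' : ℝ)))} (Sstar D)) :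
    ∀ D, Sstar D ≤ S D := by
  intro D
  apply (hSstar D).2
  rintro x ⟨D', rfl⟩
  obtain ⟨g, hg0, hgk, hstep⟩ := hpath D D'
  -- key: S (g i) ≤ exp (β * i) * S D for i ≤ d D D'
  have key : ∀ i, i ≤ d D D' → S (g i) ≤ Real.exp (β * i) * S (g 0) := by
    intro i
    induction i with
    | zero => intro _; simp
    | succ n ih =>
      intro hn
      have h1 : S (g (n+1)) ≤ Real.exp β * S (g n) := by
        apply hsmooth
        rw [hdsymm]
        exact hstep n (lt_of_lt_of_le (Nat.lt_succ_self n) hn)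
      have h2 := ih (Nat.le_of_succ_le hn)
      calc S (g (n+1)) ≤ Real.exp β * S (g n) := h1
        _ ≤ Real.exp β * (Real.exp (β * n) * S (g 0)) := by
            exact mul_le_mul_of_nonneg_left h2 (Real.exp_pos β).le
        _ = Real.exp (β * ((n + 1 : ℕ) : ℝ)) * S (g 0) := by
            rw [← mul_assoc, ← Real.exp_add]; congr 1; push_cast; ring
  have hk := key (d D D') le_rfl
  rw [hg0, hgk] at hk
  have hLS : LS D' ≤ Real.exp (β * (d D D' : ℝ)) * S D := (hub D').trans hk
  have hepos : (0:ℝ) < Real.exp (-(β * (d D D' : ℝ))) := Real.exp_pos _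
  calc LS D' * Real.exp (-(β * (d D D' : ℝ)))
      ≤ (Real.exp (β * (d D D' : ℝ)) * S D) * Real.exp (-(β * (d D D' : ℝ))) :=
        mul_le_mul_of_nonneg_right hLS hepos.le
    _ = S D := by rw [mul_comm, ← mul_assoc, ← Real.exp_add]; simp
end

section
/- Smooth sensitivity via bounded-modification maxima: S*_{f,β}(D) = max over k = 0, …, n of e^{−kβ}·A^{(k)}(D), where A^{(k)}(D) = max over datasets D' with d(D, D') ≤ k of LS_f(D'), provided all datasets are within distance n of D. -/
/-- Smooth sensitivity via bounded-modification maxima: if every dataset is within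
distance `n` of `D`, then `S*_{f,β}(D) = max_{k = 0,…,n} exp(−kβ)·A⁽ᵏ⁾(D)`, where
`A⁽ᵏ⁾(D) = max {LS_f(D') | d(D,D') ≤ k}`. -/
theorem smooth_sensitivity_eq_max_over_k {Dataset : Type*}
    (d : Dataset → Dataset → ℕ) (LS : Dataset → ℝ) (hLS : ∀ D, 0 ≤ LS D)
    (β : ℝ) (hβ : 0 < β) (n : ℕ) (D : Dataset)
    (hd0 : d D D = 0)
    (hbound : ∀ D', d D D' ≤ n)
    (A : ℕ → ℝ)
    (hA : ∀ k, IsGreatest {x | ∃ D', d D D' ≤ k ∧ x = LS D'} (A k))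
    (Sstar : ℝ)
    (hSstar : IsGreatest
      {x | ∃ D', x = LS D' * Real.exp (-(β * (d D D' : ℝ)))} Sstar) :
    IsGreatest {x | ∃ k ≤ n, x = Real.exp (-((k : ℝ) * β)) * A k} Sstar := by
  -- Upper bound part: every `exp(-kβ) * A k` with `k ≤ n` is ≤ Sstar.
  have hub : ∀ k : ℕ, Real.exp (-((k : ℝ) * β)) * A k ≤ Sstar := by
    intro k
    obtain ⟨D'', hd'', hAk⟩ := (hA k).1
    have h1 : Real.exp (-((k : ℝ) * β)) ≤ Real.exp (-(β * (d D D'' : ℝ))) := by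
      apply Real.exp_le_exp.mpr
      have : (d D D'' : ℝ) ≤ (k : ℝ) := by exact_mod_cast hd''
      nlinarith
    calc Real.exp (-((k : ℝ) * β)) * A k
        = A k * Real.exp (-((k : ℝ) * β)) := mul_comm _ _
      _ ≤ LS D'' * Real.exp (-(β * (d D D'' : ℝ))) := by
          rw [hAk]
          exact mul_le_mul_of_nonneg_left h1 (hLS _)
      _ ≤ Sstar := hSstar.2 ⟨D'', rfl⟩
  constructor
  · -- Membership: take k = d D D'
    obtain ⟨D', hS⟩ := hSstar.1
    refine ⟨d D D', hbound D', le_antisymm ?_ ?_⟩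
    · calc Sstar = LS D' * Real.exp (-(β * (d D D' : ℝ))) := hS
        _ ≤ A (d D D') * Real.exp (-(β * (d D D' : ℝ))) :=
            mul_le_mul_of_nonneg_right ((hA _).2 ⟨D', le_rfl, rfl⟩)
              (Real.exp_pos _).le
        _ = Real.exp (-((d D D' : ℝ) * β)) * A (d D D') := by
            rw [mul_comm, mul_comm β]
    · exact hub _
  · rintro x ⟨k, hk, rfl⟩
    exact hub k
end
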